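/- Let (Ω, F, P) be a probability space, let {G_n : n ≥ 1} be an increasing sequence of sub-σ-fields of F, and let {B_n : n ≥ 1} be any sequence of events in F. Then, P-almost surely, the event {B_n occurs for infinitely many n} is contained in the event {∑_{n≥1} P(B_n | G_n) = ∞}. If, moreover, there exists a constant k ≥ 1 such that B_n ∈ G_{n+k} for all n, then these two events are P-almost surely equal; consequently, for any event B ∈ F, one then has P-almost surely {B ∩ B_n occurs for infinitely many n} = {1_B · ∑_{n≥1} P(B_n | G_n) = ∞}. -/

import Mathlib

open MeasureTheory Filter

section Aux

variable {Ω : Type*} {mΩ : MeasurableSpace Ω} (P : Measure Ω) [IsProbabilityMeasure P]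
  (G : Filtration ℕ mΩ) (B : ℕ → Set Ω)

/-- The key real inequality. -/
lemma cbc_real_aux (a c : ℝ) (ha : 0 ≤ a) (hc : 0 ≤ c) :
    c * ((1 + (a + c)) ^ 2)⁻¹ ≤ (1 + a)⁻¹ - (1 + (a + c))⁻¹ := by
  have h1 : (0:ℝ) < 1 + a := by linarith
  have h2 : (0:ℝ) < 1 + (a + c) := by linarith
  have e1 : (1 + a)⁻¹ - (1 + (a + c))⁻¹ = c * ((1 + a) * (1 + (a + c)))⁻¹ := by
    field_simp
    ring
  rw [e1]
  refine mul_le_mul_of_nonneg_left ?_ hc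
  refine inv_anti₀ (by positivity) (by nlinarith)

/-- Monotone non-tendsto sequences are bounded. -/
lemma cbc_bdd_of_not_tendsto {f : ℕ → ℝ} (hmono : Monotone f)
    (h : ¬ Tendsto f atTop atTop) : ∃ c, ∀ N, f N ≤ c := by
  by_contra h'
  push_neg at h'
  exact h (tendsto_atTop_atTop_of_monotone hmono fun b => (h' b).imp fun N hN => hN.le)

/-- Part 1: a.s. inclusion of `{Bₙ i.o.}` in the divergence set. -/
lemma cbc_incl (hB : ∀ n, MeasurableSet (B n)) :
    ∀ᵐ ω ∂P, ω ∈ Filter.limsup B Filter.atTop →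
      Filter.Tendsto
        (fun N : ℕ => ∑ n ∈ Finset.range N,
          (P[Set.indicator (B n) (fun _ => (1 : ℝ)) | G n]) ω)
        Filter.atTop Filter.atTop := by
  classical
  set p : ℕ → Ω → ℝ := fun n => P[Set.indicator (B n) (fun _ => (1 : ℝ)) | G n] with hpdef
  set S : ℕ → Ω → ℝ := fun N ω => ∑ n ∈ Finset.range N, p n ω with hSdef
  have hp_meas : ∀ n, StronglyMeasurable[G n] (p n) := fun n => stronglyMeasurable_condExp
  have hp_meas0 : ∀ n, StronglyMeasurable (p n) := fun n => (hp_meas n).mono (G.le n)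
  have hp_int : ∀ n, Integrable (p n) P := fun n => integrable_condExp
  have hp_nn : ∀ᵐ ω ∂P, ∀ n, 0 ≤ p n ω :=
    ae_all_iff.2 fun n => condExp_nonneg (Eventually.of_forall fun ω =>
      Set.indicator_nonneg (fun _ _ => zero_le_one) ω)
  set h : ℕ → Ω → ℝ := fun n ω => ((1 + S (n + 1) ω) ^ 2)⁻¹ with hhdef
  have hS_eq : ∀ N, S N = ∑ i ∈ Finset.range N, p i := fun N =>
    funext fun ω => (Finset.sum_apply ω _ _).symm
  have hS_meas : ∀ n, StronglyMeasurable[G n] (S (n + 1)) := by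
    intro n
    rw [hS_eq]
    refine Finset.stronglyMeasurable_sum _ fun j hj => ?_
    exact (hp_meas j).mono (G.mono (Nat.lt_succ_iff.1 (Finset.mem_range.1 hj)))
  have hS_meas0 : ∀ N, StronglyMeasurable (S N) := by
    intro N
    rw [hS_eq]
    exact Finset.stronglyMeasurable_sum _ fun j _ => hp_meas0 j
  have hh_meas : ∀ n, StronglyMeasurable[G n] (h n) := fun n =>
    (((measurable_const.add (hS_meas n).measurable).pow_const 2).inv).stronglyMeasurable
  have hh_nn : ∀ n ω, 0 ≤ h n ω := fun n ω => inv_nonneg.2 (sq_nonneg _)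
  set ind : ℕ → Ω → ℝ := fun n => Set.indicator (B n) (fun _ => (1 : ℝ)) with hinddef
  have hind_meas : ∀ n, StronglyMeasurable (ind n) := fun n =>
    stronglyMeasurable_const.indicator (hB n)
  have hind_nn : ∀ n ω, 0 ≤ ind n ω := fun n ω =>
    Set.indicator_nonneg (fun _ _ => zero_le_one) ω
  have hind_le : ∀ n ω, ind n ω ≤ 1 := fun n ω =>
    Set.indicator_le' (fun _ _ => le_rfl) (fun _ _ => zero_le_one) ω
  have hind_int : ∀ n, Integrable (ind n) P :=
    fun n => IntegrableOn.integrable_indicator (integrable_const 1) (hB n)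
  set q : ℕ → Ω → ℝ := fun n => h n * ind n with hqdef
  have hq_nn : ∀ n ω, 0 ≤ q n ω := fun n ω => mul_nonneg (hh_nn n ω) (hind_nn n ω)
  set u : ℕ → Ω → ℝ := fun N ω => (1 + S N ω)⁻¹ with hudef
  have hu_meas : ∀ N, StronglyMeasurable (u N) := fun N =>
    ((measurable_const.add (hS_meas0 N).measurable).inv).stronglyMeasurable
  -- a.e. bounds assuming nonnegativity of the p's
  have hS_nn : ∀ᵐ ω ∂P, ∀ N, 0 ≤ S N ω := by
    filter_upwards [hp_nn] with ω hω N
    exact Finset.sum_nonneg fun j _ => hω j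
  have hu_bdd : ∀ N, ∀ᵐ ω ∂P, ‖u N ω‖ ≤ 1 := by
    intro N
    filter_upwards [hS_nn] with ω hω
    have h1 : (0:ℝ) < 1 + S N ω := by have := hω N; linarith
    rw [Real.norm_eq_abs, abs_of_nonneg (inv_nonneg.2 h1.le)]
    exact inv_le_one_of_one_le₀ (by linarith [hω N])
  have hu_int : ∀ N, Integrable (u N) P := fun N =>
    Integrable.mono' (integrable_const 1) (hu_meas N).aestronglyMeasurable (hu_bdd N)
  have hu_nn : ∀ N, ∀ᵐ ω ∂P, 0 ≤ u N ω := by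
    intro N
    filter_upwards [hS_nn] with ω hω
    have h1 : (0:ℝ) < 1 + S N ω := by have := hω N; linarith
    exact inv_nonneg.2 h1.le
  have hq_bdd : ∀ n, ∀ᵐ ω ∂P, ‖q n ω‖ ≤ 1 := by
    intro n
    filter_upwards [hS_nn] with ω hω
    have h1 : (0:ℝ) ≤ S (n + 1) ω := hω (n + 1)
    have h2 : (1:ℝ) ≤ (1 + S (n + 1) ω) ^ 2 := by nlinarith
    have h3 : h n ω ≤ 1 := by
      rw [hhdef]
      exact inv_le_one_of_one_le₀ h2
    rw [Real.norm_eq_abs, abs_of_nonneg (hq_nn n ω)]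
    calc q n ω = h n ω * ind n ω := rfl
      _ ≤ 1 * 1 := mul_le_mul h3 (hind_le n ω) (hind_nn n ω) zero_le_one
      _ = 1 := by ring
  have hq_int : ∀ n, Integrable (q n) P := fun n =>
    Integrable.mono' (integrable_const 1)
      (((hh_meas n).mono (G.le n)).mul (hind_meas n)).aestronglyMeasurable (hq_bdd n)
  -- the per-n integral bound
  have hstep : ∀ n, ∫ ω, q n ω ∂P ≤ (∫ ω, u n ω ∂P) - ∫ ω, u (n + 1) ω ∂P := by
    intro n
    have hce : P[q n | G n] =ᵐ[P] h n * P[ind n | G n] :=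
      condExp_mul_of_stronglyMeasurable_left (hh_meas n) (hq_int n) (hind_int n)
    have hqint' : Integrable (h n * p n) P := integrable_condExp.congr hce
    have hint1 : ∫ ω, q n ω ∂P = ∫ ω, (h n * p n) ω ∂P := by
      have e := integral_condExp (μ := P) (f := q n) (G.le n)
      exact e.symm.trans (integral_congr_ae hce)
    rw [hint1, ← integral_sub (hu_int n) (hu_int (n + 1))]
    refine integral_mono_ae hqint' ((hu_int n).sub (hu_int (n + 1))) ?_
    filter_upwards [hp_nn] with ω hω
    have hSnn : 0 ≤ S n ω := Finset.sum_nonneg fun j _ => hω j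
    have hsucc : S (n + 1) ω = S n ω + p n ω := Finset.sum_range_succ _ _
    have key := cbc_real_aux (S n ω) (p n ω) hSnn (hω n)
    simp only [Pi.sub_apply, Pi.mul_apply]
    calc h n ω * p n ω = p n ω * ((1 + (S n ω + p n ω)) ^ 2)⁻¹ := by
          rw [hhdef]; simp only [hsucc]; ring
      _ ≤ (1 + S n ω)⁻¹ - (1 + (S n ω + p n ω))⁻¹ := key
      _ = u n ω - u (n + 1) ω := by rw [hudef]; simp only [hsucc]
  -- partial sums of integrals are bounded by 1
  have hpartial : ∀ N, ∑ n ∈ Finset.range N, ∫ ω, q n ω ∂P ≤ 1 := by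
    intro N
    have h1 : ∑ n ∈ Finset.range N, ∫ ω, q n ω ∂P ≤
        ∑ n ∈ Finset.range N, ((∫ ω, u n ω ∂P) - ∫ ω, u (n + 1) ω ∂P) :=
      Finset.sum_le_sum fun n _ => hstep n
    rw [Finset.sum_range_sub' (fun n => ∫ ω, u n ω ∂P) N] at h1
    have hu0 : ∫ ω, u 0 ω ∂P = 1 := by
      have : u 0 = fun _ => (1:ℝ) := by
        funext ω
        simp [hudef, hSdef]
      rw [this]
      simp
    have huN : 0 ≤ ∫ ω, u N ω ∂P := integral_nonneg_of_ae (hu_nn N)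
    linarith
  -- pass to lintegrals and conclude summability a.e.
  set Q : ℕ → Ω → ENNReal := fun n ω => ENNReal.ofReal (q n ω) with hQdef
  have hQmeas : ∀ n, Measurable (Q n) := fun n =>
    ((((hh_meas n).mono (G.le n)).mul (hind_meas n)).measurable).ennreal_ofReal
  have hQint : ∀ n, ∫⁻ ω, Q n ω ∂P = ENNReal.ofReal (∫ ω, q n ω ∂P) := fun n =>
    (ofReal_integral_eq_lintegral_ofReal (hq_int n)
      (Eventually.of_forall fun ω => hq_nn n ω)).symm
  have htsum : ∑' n, ∫⁻ ω, Q n ω ∂P ≤ 1 := by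
    rw [ENNReal.tsum_eq_iSup_sum]
    refine iSup_le fun s => ?_
    rcases s.exists_nat_subset_range with ⟨N, hN⟩
    calc ∑ n ∈ s, ∫⁻ ω, Q n ω ∂P ≤ ∑ n ∈ Finset.range N, ∫⁻ ω, Q n ω ∂P :=
          Finset.sum_le_sum_of_subset hN
      _ = ENNReal.ofReal (∑ n ∈ Finset.range N, ∫ ω, q n ω ∂P) := by
          rw [ENNReal.ofReal_sum_of_nonneg fun n _ => integral_nonneg (hq_nn n)]
          exact Finset.sum_congr rfl fun n _ => hQint n
      _ ≤ ENNReal.ofReal 1 := ENNReal.ofReal_le_ofReal (hpartial N)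
      _ = 1 := ENNReal.ofReal_one
  have hae : ∀ᵐ ω ∂P, ∑' n, Q n ω < ⊤ := by
    refine ae_lt_top (Measurable.ennreal_tsum hQmeas) ?_
    rw [lintegral_tsum fun n => (hQmeas n).aemeasurable]
    exact ne_top_of_le_ne_top ENNReal.one_ne_top htsum
  -- conclusion
  filter_upwards [hp_nn, hae] with ω hωnn hωsum hmem
  rw [Filter.mem_limsup_iff_frequently_mem] at hmem
  by_contra hT
  have hmono : Monotone fun N => S N ω := fun N M hNM =>
    Finset.sum_le_sum_of_subset_of_nonneg (Finset.range_subset_range.2 hNM) fun n _ _ => hωnn n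
  obtain ⟨c, hc⟩ := cbc_bdd_of_not_tendsto hmono (fun ht => hT ht)
  have hc0 : (0:ℝ) ≤ c := le_trans (by simp [hSdef]) (hc 0)
  have hsummable : Summable fun n => q n ω := by
    have h1 := ENNReal.summable_toReal hωsum.ne
    refine h1.congr fun n => ?_
    rw [hQdef]
    exact ENNReal.toReal_ofReal (hq_nn n ω)
  have h0 := hsummable.tendsto_atTop_zero
  have hε : (0:ℝ) < ((1 + c) ^ 2)⁻¹ := by positivity
  have hfreq : ∃ᶠ n in atTop, ((1 + c) ^ 2)⁻¹ ≤ q n ω := by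
    refine hmem.mono fun n hn => ?_
    have hSnn : 0 ≤ S (n + 1) ω := Finset.sum_nonneg fun j _ => hωnn j
    have hSc : S (n + 1) ω ≤ c := hc (n + 1)
    have h2 : (0:ℝ) < (1 + S (n + 1) ω) ^ 2 := by nlinarith
    have h3 : (1 + S (n + 1) ω) ^ 2 ≤ (1 + c) ^ 2 := by nlinarith
    have h4 : ((1 + c) ^ 2)⁻¹ ≤ h n ω := by
      rw [hhdef]
      exact inv_anti₀ h2 h3
    calc ((1 + c) ^ 2)⁻¹ ≤ h n ω := h4
      _ = h n ω * ind n ω := by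
          rw [hinddef]
          simp [Set.indicator_of_mem hn]
      _ = q n ω := rfl
  rcases (hfreq.and_eventually (h0.eventually_lt_const hε)).exists with ⟨n, hn1, hn2⟩
  exact absurd hn1 (not_le.2 hn2)

/-- Lévy's lemma applied along a residue class, `k ≥ 1`, `i < k`. -/
lemma cbc_levy (hB : ∀ n, MeasurableSet (B n)) (k : ℕ) (hk : 1 ≤ k)
    (hBk : ∀ n, MeasurableSet[G (n + k)] (B n)) (i : ℕ) (hik : i < k) :
    ∀ᵐ ω ∂P, (∃ᶠ m in atTop, ω ∈ B (m * k + i)) ↔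
      Filter.Tendsto
        (fun N : ℕ => ∑ m ∈ Finset.range N,
          (P[Set.indicator (B (m * k + i)) (fun _ => (1 : ℝ)) | G (m * k + i)]) ω)
        Filter.atTop Filter.atTop := by
  classical
  set F : Filtration ℕ mΩ :=
    ⟨fun m => G (m * k + i),
     fun a b hab => G.mono (Nat.add_le_add_right (Nat.mul_le_mul_right k hab) i),
     fun m => G.le _⟩ with hF
  set s : ℕ → Set Ω := fun m => Nat.rec ∅ (fun j _ => B (j * k + i)) m with hs
  have hsm : ∀ m, MeasurableSet[F m] (s m) := by
    intro m
    cases m with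
    | zero => exact @MeasurableSet.empty _ (F 0)
    | succ j =>
      show MeasurableSet[G ((j + 1) * k + i)] (B (j * k + i))
      have h1 : (j + 1) * k + i = (j * k + i) + k := by ring
      rw [h1]
      exact hBk _
  have hlv := ae_mem_limsup_atTop_iff (μ := P) (ℱ := F) hsm
  filter_upwards [hlv] with ω hω
  have hmem : (∃ᶠ m in atTop, ω ∈ B (m * k + i)) ↔ ω ∈ limsup s atTop := by
    rw [Filter.mem_limsup_iff_frequently_mem, Filter.frequently_atTop, Filter.frequently_atTop]
    constructor
    · intro h a
      rcases h a with ⟨m, hm, hmB⟩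
      exact ⟨m + 1, by omega, hmB⟩
    · intro h a
      rcases h (a + 1) with ⟨m, hm, hmB⟩
      obtain ⟨j, rfl⟩ : ∃ j, m = j + 1 := ⟨m - 1, by omega⟩
      exact ⟨j, by omega, hmB⟩
  rw [hmem, hω]
  exact Iff.rfl

end Aux

/-- conditional Borel–Cantelli. Let `{G_n}` be an increasing sequence
of sub-σ-fields and `{B_n}` a sequence of events. Then, `P`-a.s., the event
`{B_n i.o.}` is contained in `{∑_{n≥1} P(B_n | G_n) = ∞}` (divergence of the partial
sums to infinity). If moreover there is a constant `k ≥ 1` with `B_n ∈ G_{n+k}` for all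
`n`, then the two events are `P`-a.s. equal; consequently, for any event `B`, `P`-a.s.
`{B ∩ B_n i.o.} = {1_B ∑_{n≥1} P(B_n | G_n) = ∞}`. -/
theorem conditional_borel_cantelli
    {Ω : Type*} {mΩ : MeasurableSpace Ω} (P : Measure Ω) [IsProbabilityMeasure P]
    (G : Filtration ℕ mΩ) (B : ℕ → Set Ω) (hB : ∀ n, MeasurableSet (B n)) :
    (∀ᵐ ω ∂P, ω ∈ Filter.limsup B Filter.atTop →
        Filter.Tendsto
          (fun N : ℕ => ∑ n ∈ Finset.range N,
            (P[Set.indicator (B n) (fun _ => (1 : ℝ)) | G n]) ω)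
          Filter.atTop Filter.atTop)
    ∧ (∀ k : ℕ, 1 ≤ k → (∀ n, MeasurableSet[G (n + k)] (B n)) →
        (∀ᵐ ω ∂P, ω ∈ Filter.limsup B Filter.atTop ↔
            Filter.Tendsto
              (fun N : ℕ => ∑ n ∈ Finset.range N,
                (P[Set.indicator (B n) (fun _ => (1 : ℝ)) | G n]) ω)
              Filter.atTop Filter.atTop)
        ∧ ∀ E : Set Ω, MeasurableSet E →
            ∀ᵐ ω ∂P, (ω ∈ E ∩ Filter.limsup B Filter.atTop ↔
              (ω ∈ E ∧ Filter.Tendsto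
                (fun N : ℕ => ∑ n ∈ Finset.range N,
                  (P[Set.indicator (B n) (fun _ => (1 : ℝ)) | G n]) ω)
                Filter.atTop Filter.atTop))) := by
  set p : ℕ → Ω → ℝ := fun n => P[Set.indicator (B n) (fun _ => (1 : ℝ)) | G n] with hp
  refine ⟨cbc_incl P G B hB, fun k hk hBk => ?_⟩
  have hmain : ∀ᵐ ω ∂P, ω ∈ Filter.limsup B Filter.atTop ↔
      Filter.Tendsto (fun N : ℕ => ∑ n ∈ Finset.range N, p n ω) atTop atTop := by
    have hlevy : ∀ᵐ ω ∂P, ∀ i, i < k → ((∃ᶠ m in atTop, ω ∈ B (m * k + i)) ↔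
        Filter.Tendsto (fun N : ℕ => ∑ m ∈ Finset.range N, p (m * k + i) ω) atTop atTop) := by
      rw [ae_all_iff]
      intro i
      rcases lt_or_ge i k with hik | hik
      · filter_upwards [cbc_levy P G B hB k hk hBk i hik] with ω hω _ using hω
      · filter_upwards with ω hik' using absurd hik' (not_lt.2 hik)
    have hnn : ∀ᵐ ω ∂P, ∀ n, 0 ≤ p n ω :=
      ae_all_iff.2 fun n => condExp_nonneg <|
        Eventually.of_forall fun ω => Set.indicator_nonneg (fun _ _ => zero_le_one) ω
    filter_upwards [hlevy, hnn] with ω hω hωnn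
    have hkpos : 0 < k := hk
    -- injections
    have hinjres : ∀ i, Function.Injective (fun m : ℕ => m * k + i) := by
      intro i m m' hmm
      simp only [add_left_inj] at hmm
      exact Nat.eq_of_mul_eq_mul_right hkpos hmm
    constructor
    · intro hmem
      rw [Filter.mem_limsup_iff_frequently_mem] at hmem
      -- pigeonhole: some residue class occurs i.o.
      have hres : ∃ i, i < k ∧ ∃ᶠ m in atTop, ω ∈ B (m * k + i) := by
        by_contra hno
        push_neg at hno
        have hev : ∀ i, ∃ a, ∀ m ≥ a, i < k → ω ∉ B (m * k + i) := by
          intro i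
          by_cases hik : i < k
          · have := hno i hik
            rcases (eventually_atTop.1 this) with ⟨a, ha⟩
            exact ⟨a, fun m hm _ => ha m hm⟩
          · exact ⟨0, fun m _ h => absurd h hik⟩
        choose M hM using hev
        set bigM := (Finset.range k).sup M with hbigM
        rw [Filter.frequently_atTop] at hmem
        rcases hmem (bigM * k + k) with ⟨n, hn, hnB⟩
        have hrepr : (n / k) * k + n % k = n := Nat.div_add_mod' n k
        have hdiv : bigM ≤ n / k := by
          have : bigM + 1 ≤ n / k := by
            rw [Nat.le_div_iff_mul_le hkpos]
            calc (bigM + 1) * k = bigM * k + k := by ring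
            _ ≤ n := hn
          omega
        have hMle : M (n % k) ≤ bigM :=
          Finset.le_sup (Finset.mem_range.2 (Nat.mod_lt _ hkpos))
        exact hM (n % k) (n / k) (le_trans hMle hdiv) (Nat.mod_lt _ hkpos)
          (by rwa [hrepr])
      rcases hres with ⟨i, hik, hfreq⟩
      have hTi := (hω i hik).1 hfreq
      -- T_i → ∞ implies S → ∞
      refine tendsto_atTop_atTop_of_monotone ?_ ?_
      · intro N M hNM
        exact Finset.sum_le_sum_of_subset_of_nonneg
          (Finset.range_subset_range.2 hNM) (fun n _ _ => hωnn n)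
      · intro b
        rcases (Filter.tendsto_atTop.1 hTi b).exists with ⟨M, hM⟩
        refine ⟨M * k + k, le_trans hM ?_⟩
        have := Finset.sum_image (f := fun n => p n ω)
          (s := Finset.range M) (g := fun m => m * k + i)
          (fun x _ y _ h => hinjres i h)
        rw [← this]
        refine Finset.sum_le_sum_of_subset_of_nonneg ?_ (fun n _ _ => hωnn n)
        intro n hn
        rcases Finset.mem_image.1 hn with ⟨m, hm, rfl⟩
        rw [Finset.mem_range] at hm ⊢
        calc m * k + i < m * k + k := by omega
        _ = (m + 1) * k := by ring
        _ ≤ M * k := Nat.mul_le_mul_right k hm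
        _ ≤ M * k + k := Nat.le_add_right _ _
    · intro hS
      -- some residue-class sum must diverge
      have hres : ∃ i, i < k ∧
          Filter.Tendsto (fun N : ℕ => ∑ m ∈ Finset.range N, p (m * k + i) ω) atTop atTop := by
        by_contra hno
        push_neg at hno
        have hbdd : ∀ i, ∃ c, ∀ N, i < k →
            (∑ m ∈ Finset.range N, p (m * k + i) ω) ≤ c := by
          intro i
          by_cases hik : i < k
          · rcases cbc_bdd_of_not_tendsto
              (f := fun N => ∑ m ∈ Finset.range N, p (m * k + i) ω)
              (fun N M hNM => Finset.sum_le_sum_of_subset_of_nonneg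
                (Finset.range_subset_range.2 hNM) (fun n _ _ => hωnn _))
              (hno i hik) with ⟨c, hc⟩
            exact ⟨c, fun N _ => hc N⟩
          · exact ⟨0, fun N h => absurd h hik⟩
        choose c hc using hbdd
        have hSbdd : ∀ N, (∑ n ∈ Finset.range N, p n ω) ≤ ∑ i ∈ Finset.range k, c i := by
          intro N
          have key : (∑ n ∈ Finset.range N, p n ω) ≤
              ∑ x ∈ Finset.range k ×ˢ Finset.range N, p (x.2 * k + x.1) ω := by
            have hinj : ∀ x ∈ Finset.range k ×ˢ Finset.range N,
                ∀ y ∈ Finset.range k ×ˢ Finset.range N,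
                x.2 * k + x.1 = y.2 * k + y.1 → x = y := by
              rintro ⟨i, m⟩ hx ⟨i', m'⟩ hy h
              simp only [Finset.mem_product, Finset.mem_range] at hx hy
              simp only at h
              have hi : i = i' := by
                have h1 : (m' * k + i') % k = i' := Nat.mul_add_mod_of_lt hy.1
                have h2 : (m * k + i) % k = i := Nat.mul_add_mod_of_lt hx.1
                rw [← h1, ← h, h2]
              subst hi
              have hm : m = m' := Nat.eq_of_mul_eq_mul_right hkpos (Nat.add_right_cancel h)
              simp [hm]
            rw [← Finset.sum_image (f := fun n => p n ω)
              (g := fun x : ℕ × ℕ => x.2 * k + x.1) (fun x hx y hy h => hinj x hx y hy h)]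
            refine Finset.sum_le_sum_of_subset_of_nonneg ?_ (fun n _ _ => hωnn n)
            intro n hn
            rw [Finset.mem_range] at hn
            refine Finset.mem_image.2 ⟨(n % k, n / k), ?_, Nat.div_add_mod' n k⟩
            simp only [Finset.mem_product, Finset.mem_range]
            exact ⟨Nat.mod_lt _ hkpos, lt_of_le_of_lt (Nat.div_le_self n k) hn⟩
          rw [Finset.sum_product] at key
          refine key.trans (Finset.sum_le_sum fun i hi => ?_)
          exact hc i N (Finset.mem_range.1 hi)
        rcases (Filter.tendsto_atTop.1 hS ((∑ i ∈ Finset.range k, c i) + 1)).exists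
          with ⟨N, hN⟩
        linarith [hSbdd N]
      rcases hres with ⟨i, hik, hTi⟩
      rw [Filter.mem_limsup_iff_frequently_mem]
      have hfreq : ∃ᶠ m in atTop, ω ∈ B (m * k + i) := (hω i hik).2 hTi
      rw [Filter.frequently_atTop] at hfreq ⊢
      intro a
      rcases hfreq a with ⟨m, hm, hmB⟩
      exact ⟨m * k + i, le_trans hm (le_trans (Nat.le_mul_of_pos_right m hkpos)
        (Nat.le_add_right _ _)), hmB⟩
  refine ⟨hmain, fun E hE => ?_⟩
  filter_upwards [hmain] with ω hω
  constructor
  · rintro ⟨hωE, hωl⟩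
    exact ⟨hωE, hω.1 hωl⟩
  · rintro ⟨hωE, hωt⟩
    exact ⟨hωE, hω.2 hωt⟩
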